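/- arXiv:1208.5088 — 5 statements merged into one kernel-verified Lean document; each statement's English description precedes it below -/
import Mathlib

section
/- If h: ℝ → ℝ is C² with h(0) = h'(0) = 0, h'' nonnegative and concave on [0,∞), then for all 0 ≤ c ≤ 1 and x ≥ 0, h(cx) ≥ c³ h(x). -/
/-!
Concavity of `h''` on `[0, ∞)` with `h''(0) ≥ 0` gives `c h''(t) ≤ h''(ct)`. If `f(0) = 0` and
`cⁿ f'(t) ≤ f'(ct)` on `[0, ∞)`, then `s ↦ f(cs) - cⁿ⁺¹ f(s)` has derivative
`c (f'(cs) - cⁿ f'(s)) ≥ 0` and vanishes at `0`, so `cⁿ⁺¹ f(x) ≤ f(cx)`. Applying this to `f = h'`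
and then to `f = h` raises the exponent from `1` to `3`.
-/

open Set

lemma ConcaveOn.mul_le_map_mul {g : ℝ → ℝ} (hg : ConcaveOn ℝ (Ici 0) g) (hg0 : 0 ≤ g 0)
    {c t : ℝ} (hc0 : 0 ≤ c) (hc1 : c ≤ 1) (ht : 0 ≤ t) : c * g t ≤ g (c * t) := by
  have hconc := hg.2 (mem_Ici.mpr ht) (mem_Ici.mpr le_rfl) hc0 (sub_nonneg.mpr hc1)
    (add_sub_cancel c 1)
  simp only [smul_eq_mul, mul_zero, add_zero] at hconc
  nlinarith

lemma pow_succ_mul_le_map_mul_of_deriv {f : ℝ → ℝ} (hf : Differentiable ℝ f) (hf0 : f 0 = 0)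
    {c : ℝ} (hc : 0 ≤ c) (n : ℕ) (hf' : ∀ t ≥ 0, c ^ n * deriv f t ≤ deriv f (c * t))
    {x : ℝ} (hx : 0 ≤ x) : c ^ (n + 1) * f x ≤ f (c * x) := by
  set G : ℝ → ℝ := fun s => f (c * s) - c ^ (n + 1) * f s
  have hG : ∀ s, HasDerivAt G (c * (deriv f (c * s) - c ^ n * deriv f s)) s := by
    intro s
    have hscale : HasDerivAt (fun u => f (c * u)) (deriv f (c * s) * c) s :=
      (hf (c * s)).hasDerivAt.comp s ((hasDerivAt_id s).const_mul c |>.congr_deriv (mul_one c))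
    exact (hscale.sub ((hf s).hasDerivAt.const_mul (c ^ (n + 1)))).congr_deriv (by ring)
  have hG_mono : MonotoneOn G (Ici 0) := by
    refine monotoneOn_of_deriv_nonneg (convex_Ici 0)
      (fun s _ => (hG s).continuousAt.continuousWithinAt)
      (fun s _ => (hG s).differentiableAt.differentiableWithinAt) fun s hs => ?_
    rw [interior_Ici] at hs
    rw [(hG s).deriv]
    exact mul_nonneg hc (sub_nonneg.mpr (hf' s (le_of_lt hs)))
  have := hG_mono (mem_Ici.mpr le_rfl) (mem_Ici.mpr hx) hx
  simp only [G, mul_zero, hf0] at this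
  linarith

theorem stmt_3 (h : ℝ → ℝ) (hC2 : ContDiff ℝ 2 h)
    (h0 : h 0 = 0) (h1 : deriv h 0 = 0)
    (hnonneg : ∀ x ≥ (0:ℝ), 0 ≤ deriv (deriv h) x)
    (hconc : ConcaveOn ℝ (Set.Ici (0:ℝ)) (deriv (deriv h))) :
    ∀ c x : ℝ, 0 ≤ c → c ≤ 1 → 0 ≤ x → c ^ 3 * h x ≤ h (c * x) := by
  intro c x hc0 hc1 hx
  have h'' : ∀ t ≥ 0, c ^ 1 * deriv (deriv h) t ≤ deriv (deriv h) (c * t) := fun t ht => by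
    simpa using hconc.mul_le_map_mul (hnonneg 0 le_rfl) hc0 hc1 ht
  have h' : ∀ t ≥ 0, c ^ 2 * deriv h t ≤ deriv h (c * t) := fun t ht =>
    pow_succ_mul_le_map_mul_of_deriv hC2.differentiable_deriv_two h1 hc0 1 h'' ht
  exact pow_succ_mul_le_map_mul_of_deriv (hC2.differentiable (by norm_num)) h0 hc0 2 h' hx
end

section
/- If h: ℝ → ℝ is C² with h(0) = h'(0) = 0, h'' nonnegative and concave on [0,∞), then h(x) ≤ h(1)·x³ for all x ≥ 1; in particular h(x) = O(x³) as x → ∞. -/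
/-!
Write `g = h''`. Since `g` is concave on `[0, ∞)` with `g 0 ≥ 0`, the chord bound `s g(x) ≤ x g(s)`
for `0 ≤ s ≤ x` gives `h'(x) = ∫₀ˣ g ≥ x g(x) / 2`. Hence `3h - x h'`, whose derivative is
`2h' - x g ≥ 0`, is nonnegative, i.e. `x h' ≤ 3h`, which says that `h(x) / x³` is antitone.
-/

open Set

theorem apply_le_apply_of_hasDerivAt_nonneg {F F' : ℝ → ℝ} {a b : ℝ} (hab : a ≤ b)
    (hF : ∀ x ∈ Icc a b, HasDerivAt F (F' x) x) (hF' : ∀ x ∈ Ioo a b, 0 ≤ F' x) : F a ≤ F b := by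
  refine monotoneOn_of_hasDerivWithinAt_nonneg (f' := F') (convex_Icc a b)
    (fun x hx ↦ (hF x hx).continuousAt.continuousWithinAt) (fun x hx ↦ ?_) (fun x hx ↦ ?_)
    (left_mem_Icc.2 hab) (right_mem_Icc.2 hab) hab
  · exact (hF x (interior_subset hx)).hasDerivWithinAt
  · exact hF' x (by rwa [interior_Icc] at hx)

theorem ConcaveOn.mul_le_mul_of_nonneg_at_zero {f : ℝ → ℝ} (hf : ConcaveOn ℝ (Ici 0) f)
    (hf0 : 0 ≤ f 0) {s x : ℝ} (hs : 0 ≤ s) (hsx : s ≤ x) : s * f x ≤ x * f s := by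
  rcases hs.eq_or_lt with rfl | hs
  · simpa using mul_nonneg (hs.trans hsx) hf0
  have hx : 0 < x := hs.trans_le hsx
  have hchord := hf.2 (mem_Ici.2 le_rfl) (mem_Ici.2 hx.le) (sub_nonneg.2 ((div_le_one hx).2 hsx))
    (div_nonneg hs.le hx.le) (sub_add_cancel 1 (s / x))
  simp only [smul_eq_mul, mul_zero, zero_add, div_mul_cancel₀ s hx.ne'] at hchord
  have : s / x * f x ≤ f s := by nlinarith [mul_nonneg (sub_nonneg.2 ((div_le_one hx).2 hsx)) hf0]
  calc s * f x = x * (s / x * f x) := by field_simp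
    _ ≤ x * f s := by gcongr

theorem mul_le_two_mul_of_hasDerivAt_of_concaveOn {φ g : ℝ → ℝ}
    (hφ : ∀ x ≥ 0, HasDerivAt φ (g x) x) (hφ0 : φ 0 = 0) (hg : ConcaveOn ℝ (Ici 0) g)
    (hg0 : 0 ≤ g 0) {x : ℝ} (hx : 0 ≤ x) : x * g x ≤ 2 * φ x := by
  rcases hx.eq_or_lt with rfl | hx
  · simp [hφ0]
  have hF : ∀ s ∈ Icc 0 x,
      HasDerivAt (fun s ↦ x * φ s - s ^ 2 / 2 * g x) (x * g s - s * g x) s := fun s hs ↦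
    (((hφ s hs.1).const_mul x).sub (((hasDerivAt_pow 2 s).div_const 2).mul_const (g x))).congr_deriv
      (by push_cast; ring)
  have := apply_le_apply_of_hasDerivAt_nonneg hx.le hF fun s hs ↦
    sub_nonneg.2 (hg.mul_le_mul_of_nonneg_at_zero hg0 hs.1.le hs.2.le)
  simp only [hφ0] at this
  nlinarith

theorem mul_le_succ_mul_of_hasDerivAt {ψ φ g : ℝ → ℝ} {n : ℝ}
    (hψ : ∀ x ≥ 0, HasDerivAt ψ (φ x) x) (hφ : ∀ x ≥ 0, HasDerivAt φ (g x) x) (hψ0 : ψ 0 = 0)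
    (hbound : ∀ x ≥ 0, x * g x ≤ n * φ x) {x : ℝ} (hx : 0 ≤ x) :
    x * φ x ≤ (n + 1) * ψ x := by
  have hF : ∀ s ∈ Icc 0 x,
      HasDerivAt (fun s ↦ (n + 1) * ψ s - s * φ s) (n * φ s - s * g s) s := fun s hs ↦
    (((hψ s hs.1).const_mul (n + 1)).sub ((hasDerivAt_id' s).mul (hφ s hs.1))).congr_deriv
      (by ring)
  have := apply_le_apply_of_hasDerivAt_nonneg hx hF fun s hs ↦ sub_nonneg.2 (hbound s hs.1.le)
  simp only [hψ0] at this
  linarith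

theorem mul_pow_le_mul_pow_of_hasDerivAt {ψ φ : ℝ → ℝ} {a : ℝ} (ha : 0 < a) (n : ℕ)
    (hψ : ∀ x ≥ a, HasDerivAt ψ (φ x) x) (hbound : ∀ x ≥ a, x * φ x ≤ n * ψ x) {x : ℝ}
    (hx : a ≤ x) : ψ x * a ^ n ≤ ψ a * x ^ n := by
  have hF : ∀ s ∈ Icc a x, HasDerivAt (fun s ↦ -(ψ s / s ^ n))
      (-((φ s * s ^ n - ψ s * (n * s ^ (n - 1))) / (s ^ n) ^ 2)) s := fun s hs ↦
    ((hψ s hs.1).div (hasDerivAt_pow n s) (pow_ne_zero n (ha.trans_le hs.1).ne')).neg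
  have := apply_le_apply_of_hasDerivAt_nonneg hx hF fun s hs ↦ by
    have hs0 : 0 < s := ha.trans hs.1
    rw [neg_nonneg]
    apply div_nonpos_of_nonpos_of_nonneg _ (by positivity)
    rcases n with _ | n
    · simpa using nonpos_of_mul_nonpos_right (by simpa using hbound s hs.1.le) hs0
    · have := mul_le_mul_of_nonneg_left (hbound s hs.1.le) (pow_nonneg hs0.le n)
      rw [pow_succ]
      push_cast at this ⊢
      nlinarith
  rw [neg_le_neg_iff, div_le_div_iff₀ (pow_pos (ha.trans_le hx) n) (pow_pos ha n)] at this
  exact this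

theorem stmt_6 (h : ℝ → ℝ) (hC2 : ContDiff ℝ 2 h)
    (h0 : h 0 = 0) (h1 : deriv h 0 = 0)
    (hnonneg : ∀ x ≥ (0:ℝ), 0 ≤ deriv (deriv h) x)
    (hconc : ConcaveOn ℝ (Set.Ici (0:ℝ)) (deriv (deriv h))) :
    (∀ x ≥ (1:ℝ), h x ≤ h 1 * x ^ 3) ∧ h =O[Filter.atTop] (fun x : ℝ => x ^ 3) := by
  have hh' : ∀ x, HasDerivAt h (deriv h x) x := fun x ↦
    (hC2.differentiable (by norm_num) x).hasDerivAt
  have hh'' : ∀ x, HasDerivAt (deriv h) (deriv (deriv h) x) x := fun x ↦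
    ((hC2.iterate_deriv' 1 1).differentiable one_ne_zero x).hasDerivAt
  have hsecond : ∀ x ≥ 0, x * deriv (deriv h) x ≤ 2 * deriv h x := fun x hx ↦
    mul_le_two_mul_of_hasDerivAt_of_concaveOn (fun y _ ↦ hh'' y) h1 hconc (hnonneg 0 le_rfl) hx
  have hfirst : ∀ x ≥ 0, x * deriv h x ≤ 3 * h x := fun x hx ↦ by
    have := mul_le_succ_mul_of_hasDerivAt (fun y _ ↦ hh' y) (fun y _ ↦ hh'' y) h0 hsecond hx
    norm_num at this
    exact this
  have hcubic : ∀ x ≥ 1, h x ≤ h 1 * x ^ 3 := fun x hx ↦ by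
    simpa using mul_pow_le_mul_pow_of_hasDerivAt one_pos 3 (fun y _ ↦ hh' y)
      (fun y hy ↦ by exact_mod_cast hfirst y (by linarith)) hx
  have hpos : ∀ x ≥ 0, 0 ≤ h x := fun x hx ↦ by
    have := mul_nonneg hx (hnonneg x hx)
    nlinarith [hsecond x hx, hfirst x hx]
  refine ⟨hcubic, Asymptotics.IsBigO.of_bound |h 1| ?_⟩
  filter_upwards [Filter.eventually_ge_atTop 1] with x hx
  rw [Real.norm_of_nonneg (hpos x (by linarith)), Real.norm_of_nonneg (by positivity)]
  exact (hcubic x hx).trans (by gcongr; exact le_abs_self _)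
end

section
/- Suppose h: ℝ → ℝ is even, C², h(0) = h'(0) = h''(0) = 0, and h'' is strictly increasing, unbounded, and concave on [0,∞). Then for every b > 0 and every y ≥ 0, 1 + y + y²/2 − h(by)/h(b) < 2. -/
/-!
On `[0, b]` the second derivative of `x ↦ h (y * x)` is `y ^ 2 * h'' (y * x)`, and concavity of `h''`
with `h'' 0 = 0` gives `h'' (y * x) ≥ y * h'' x` for `y ≤ 1`, while monotonicity gives
`h'' (y * x) ≥ h'' x` for `y ≥ 1`. Integrating twice from `0` yields `h (b * y) ≥ y ^ 3 * h b` for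
`y ≤ 1` and `h (b * y) ≥ y ^ 2 * h b` for `y ≥ 1`, and then `1 + y + y ^ 2 / 2 - y ^ 3 < 2` on `[0, 1]`
and `1 + y - y ^ 2 / 2 < 2` everywhere.
-/

open Set

theorem ConcaveOn.smul_le_apply_smul {E : Type*} [AddCommGroup E] [Module ℝ E] {s : Set E}
    {f : E → ℝ} (hf : ConcaveOn ℝ s f) (hs : (0 : E) ∈ s) (hf0 : 0 ≤ f 0) {x : E} (hx : x ∈ s)
    {t : ℝ} (ht₀ : 0 ≤ t) (ht₁ : t ≤ 1) : t * f x ≤ f (t • x) := by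
  have := hf.2 hx hs ht₀ (sub_nonneg.2 ht₁) (by ring)
  simp only [smul_zero, add_zero, smul_eq_mul] at this
  nlinarith

theorem nonneg_of_hasDerivAt_nonneg {F F' : ℝ → ℝ} {a b : ℝ}
    (hF : ∀ x ∈ Icc a b, HasDerivAt F (F' x) x) (ha : 0 ≤ F a) (hF' : ∀ x ∈ Ioo a b, 0 ≤ F' x)
    {x : ℝ} (hx : x ∈ Icc a b) : 0 ≤ F x := by
  have hmono : MonotoneOn F (Icc a b) := by
    refine monotoneOn_of_hasDerivWithinAt_nonneg (f' := F') (convex_Icc a b)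
      (fun x hx ↦ (hF x hx).continuousAt.continuousWithinAt) (fun x hx ↦ ?_) ?_
    · rw [interior_Icc] at hx ⊢
      exact (hF x (Ioo_subset_Icc_self hx)).hasDerivWithinAt
    · rwa [interior_Icc]
  exact ha.trans (hmono (left_mem_Icc.2 (hx.1.trans hx.2)) hx hx.1)

theorem nonneg_of_hasDerivAt_of_hasDerivAt_nonneg {F F' F'' : ℝ → ℝ} {a b : ℝ}
    (hF : ∀ x ∈ Icc a b, HasDerivAt F (F' x) x) (hF' : ∀ x ∈ Icc a b, HasDerivAt F' (F'' x) x)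
    (ha : 0 ≤ F a) (ha' : 0 ≤ F' a) (hF'' : ∀ x ∈ Ioo a b, 0 ≤ F'' x) {x : ℝ} (hx : x ∈ Icc a b) :
    0 ≤ F x :=
  nonneg_of_hasDerivAt_nonneg hF ha
    (fun _ hy ↦ nonneg_of_hasDerivAt_nonneg hF' ha' hF'' (Ioo_subset_Icc_self hy)) hx

theorem mul_le_apply_mul_of_deriv_deriv_le {h : ℝ → ℝ} (hC2 : ContDiff ℝ 2 h) (h0 : h 0 = 0)
    (h1 : deriv h 0 = 0) {b c y : ℝ} (hb : 0 ≤ b)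
    (hcmp : ∀ x ∈ Ioo 0 b, c * deriv (deriv h) x ≤ y ^ 2 * deriv (deriv h) (y * x)) :
    c * h b ≤ h (y * b) := by
  have hd : Differentiable ℝ h := hC2.differentiable two_ne_zero
  have hdd : Differentiable ℝ (deriv h) := hC2.differentiable_deriv_two
  have hscale (x : ℝ) : HasDerivAt (fun x ↦ y * x) y x := by
    simpa using (hasDerivAt_id x).const_mul y
  have hF (x : ℝ) : HasDerivAt (fun x ↦ h (y * x) - c * h x)
      (deriv h (y * x) * y - c * deriv h x) x :=
    ((hd _).hasDerivAt.comp x (hscale x)).sub ((hd x).hasDerivAt.const_mul c)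
  have hF' (x : ℝ) : HasDerivAt (fun x ↦ deriv h (y * x) * y - c * deriv h x)
      (deriv (deriv h) (y * x) * y * y - c * deriv (deriv h) x) x :=
    (((hdd _).hasDerivAt.comp x (hscale x)).mul_const y).sub ((hdd x).hasDerivAt.const_mul c)
  have := nonneg_of_hasDerivAt_of_hasDerivAt_nonneg (fun x _ ↦ hF x) (fun x _ ↦ hF' x)
    (by simp [h0]) (by simp [h1]) (fun x hx ↦ by nlinarith [hcmp x hx]) (right_mem_Icc.2 hb)
  linarith

theorem pos_of_deriv_deriv_strictMonoOn {h : ℝ → ℝ} (hC2 : ContDiff ℝ 2 h) (h0 : h 0 = 0)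
    (h1 : deriv h 0 = 0) (h2 : deriv (deriv h) 0 = 0)
    (hmono : StrictMonoOn (deriv (deriv h)) (Ici 0)) {b : ℝ} (hb : 0 < b) : 0 < h b := by
  have hdd_pos : ∀ x ∈ interior (Ici (0 : ℝ)), 0 < deriv (deriv h) x := fun x hx ↦ by
    rw [interior_Ici] at hx
    simpa [h2] using hmono self_mem_Ici (Ioi_subset_Ici_self hx) hx
  have hd_pos : ∀ x ∈ interior (Ici (0 : ℝ)), 0 < deriv h x := fun x hx ↦ by
    rw [interior_Ici] at hx
    simpa [h1] using strictMonoOn_of_deriv_pos (convex_Ici 0)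
      hC2.differentiable_deriv_two.continuous.continuousOn hdd_pos self_mem_Ici (Ioi_subset_Ici_self hx) hx
  simpa [h0] using strictMonoOn_of_deriv_pos (convex_Ici 0)
    (hC2.continuous.continuousOn) hd_pos self_mem_Ici hb.le hb

theorem stmt_8_general (h : ℝ → ℝ) (hC2 : ContDiff ℝ 2 h)
    (h0 : h 0 = 0) (h1 : deriv h 0 = 0) (h2 : deriv (deriv h) 0 = 0)
    (hmono : StrictMonoOn (deriv (deriv h)) (Set.Ici (0:ℝ)))
    (hconc : ConcaveOn ℝ (Set.Ici (0:ℝ)) (deriv (deriv h))) :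
    ∀ b > (0:ℝ), ∀ y ≥ (0:ℝ), 1 + y + y ^ 2 / 2 - h (b * y) / h b < 2 := by
  intro b hb y hy
  have hhb : 0 < h b := pos_of_deriv_deriv_strictMonoOn hC2 h0 h1 h2 hmono hb
  rw [mul_comm b y]
  rcases le_or_gt y 1 with hy1 | hy1
  · have hcmp : ∀ x ∈ Ioo 0 b, y ^ 3 * deriv (deriv h) x ≤ y ^ 2 * deriv (deriv h) (y * x) :=
      fun x hx ↦ by
        have := hconc.smul_le_apply_smul self_mem_Ici h2.ge (le_of_lt hx.1) hy hy1
        rw [smul_eq_mul] at this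
        nlinarith [sq_nonneg y]
    have hratio : y ^ 3 ≤ h (y * b) / h b :=
      (le_div_iff₀ hhb).2 (mul_le_apply_mul_of_deriv_deriv_le hC2 h0 h1 hb.le hcmp)
    nlinarith [sq_nonneg (y - 1), sq_nonneg y, sq_nonneg (y - 1 / 2)]
  · have hcmp : ∀ x ∈ Ioo 0 b, y ^ 2 * deriv (deriv h) x ≤ y ^ 2 * deriv (deriv h) (y * x) :=
      fun x hx ↦ by
        have hx0 : 0 ≤ x := le_of_lt hx.1
        gcongr
        exact hmono.monotoneOn hx0 (mul_nonneg hy hx0) (le_mul_of_one_le_left hx0 hy1.le)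
    have hratio : y ^ 2 ≤ h (y * b) / h b :=
      (le_div_iff₀ hhb).2 (mul_le_apply_mul_of_deriv_deriv_le hC2 h0 h1 hb.le hcmp)
    nlinarith [sq_nonneg (y - 1)]

theorem stmt_8 (h : ℝ → ℝ) (heven : ∀ x, h (-x) = h x) (hC2 : ContDiff ℝ 2 h)
    (h0 : h 0 = 0) (h1 : deriv h 0 = 0) (h2 : deriv (deriv h) 0 = 0)
    (hmono : StrictMonoOn (deriv (deriv h)) (Set.Ici (0:ℝ)))
    (hunb : ∀ C : ℝ, ∃ x ≥ (0:ℝ), deriv (deriv h) x > C)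
    (hconc : ConcaveOn ℝ (Set.Ici (0:ℝ)) (deriv (deriv h))) :
    ∀ b > (0:ℝ), ∀ y ≥ (0:ℝ), 1 + y + y ^ 2 / 2 - h (b * y) / h b < 2 :=
  stmt_8_general h hC2 h0 h1 h2 hmono hconc
end

section
/- For h(x) = (1+x)² ln²(1+x) − x² (x ≥ 0), the series ∑_{n≥16} 1/h(√(n/ln ln n)) converges. -/
/-!
Write `b = log N` and `x = √(N / log b)`. Then `x² = N / log b` and `log (1 + x) ≥ b / 4`, and
`h x ≥ x² log² (1 + x) / 2` once `log² (1 + x) ≥ 2`, so `h x ≥ N b² / (32 log b) ≥ N b^{3/2} / 64`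
by `log b ≤ 2 √b`. The series is thus dominated by the Bertrand series `∑ 1 / (N (log N)^{3/2})`,
which converges by Cauchy condensation.
-/

open Real Filter

theorem Real.summable_one_div_nat_mul_log_rpow {p : ℝ} (hp : 1 < p) :
    Summable fun n : ℕ => 1 / (n * log n ^ p) := by
  rw [← summable_condensed_iff_of_eventually_nonneg
    (Eventually.of_forall fun n => by positivity)]
  · have hcond : (fun k : ℕ => (2 : ℝ) ^ k * (1 / ((2 ^ k : ℕ) * log (2 ^ k : ℕ) ^ p))) =
        fun k : ℕ => (log 2 ^ p)⁻¹ * (1 / (k : ℝ) ^ p) := by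
      ext k
      rw [Nat.cast_pow, Nat.cast_ofNat, log_pow, mul_rpow k.cast_nonneg (log_nonneg one_le_two)]
      field_simp
    rw [hcond]
    exact ((summable_one_div_nat_rpow).2 hp).mul_left _
  · filter_upwards [eventually_ge_atTop 2] with k hk
    have hk : (2 : ℝ) ≤ k := by exact_mod_cast hk
    have hlog : 0 < log k := log_pos (by linarith)
    gcongr <;> linarith

theorem sq_mul_sq_div_two_le {x L : ℝ} (hx : 0 ≤ x) (hL : 2 ≤ L ^ 2) :
    x ^ 2 * L ^ 2 / 2 ≤ (1 + x) ^ 2 * L ^ 2 - x ^ 2 := by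
  nlinarith [mul_nonneg (sq_nonneg x) (sub_nonneg.2 hL), mul_nonneg hx (sq_nonneg L)]

theorem mul_log_rpow_div_le_sq_mul_log_sq_sub_sq {N : ℝ} (hN0 : 0 < N) (hN : 16 ≤ log N) :
    N * log N ^ (3 / 2 : ℝ) / 64 ≤
      (1 + √(N / log (log N))) ^ 2 * log (1 + √(N / log (log N))) ^ 2 -
        √(N / log (log N)) ^ 2 := by
  set b := log N
  set P := log b
  set x := √(N / P)
  have hb : 0 < b := by linarith
  have hsb : 4 ≤ √b := le_sqrt_of_sq_le (by linarith)
  have hP0 : 0 < P := log_pos (by linarith)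
  have hP : P ≤ 2 * √b := by
    simpa [sqrt_eq_rpow, div_eq_mul_inv, mul_comm] using log_le_rpow_div hb.le one_half_pos
  have hb_sq : √b * √b = b := mul_self_sqrt hb.le
  have hx2 : x ^ 2 = N / P := sq_sqrt (by positivity)
  have hlogx : b / 4 ≤ log x := by
    have hlogP : log P ≤ b / 2 := by nlinarith [log_le_self hP0.le]
    rw [log_sqrt (by positivity), log_div hN0.ne' hP0.ne']
    linarith
  have hL : b / 4 ≤ log (1 + x) :=
    hlogx.trans (log_le_log (sqrt_pos.2 (by positivity)) (by linarith))
  have hrpow : b ^ (3 / 2 : ℝ) = b * √b := by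
    rw [show (3 / 2 : ℝ) = 1 + 1 / 2 by norm_num, rpow_add hb, rpow_one, sqrt_eq_rpow]
  calc N * b ^ (3 / 2 : ℝ) / 64 = N * b ^ 2 / (32 * (2 * √b)) := by
        rw [hrpow, div_eq_div_iff (by norm_num) (by positivity)]
        linear_combination (64 * N * b) * hb_sq
    _ ≤ N * b ^ 2 / (32 * P) := by gcongr
    _ = x ^ 2 * (b / 4) ^ 2 / 2 := by rw [hx2]; field_simp; ring
    _ ≤ x ^ 2 * log (1 + x) ^ 2 / 2 := by gcongr
    _ ≤ (1 + x) ^ 2 * log (1 + x) ^ 2 - x ^ 2 :=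
        sq_mul_sq_div_two_le (sqrt_nonneg _) (by nlinarith)

theorem stmt_13 :
    let h : ℝ → ℝ := fun x => (1 + x) ^ 2 * (Real.log (1 + x)) ^ 2 - x ^ 2
    Summable (fun n : ℕ =>
      1 / h (Real.sqrt ((((n + 16 : ℕ) : ℝ)) / Real.log (Real.log ((n + 16 : ℕ) : ℝ))))) := by
  intro h
  refine (summable_nat_add_iff 16).2 (?_ : Summable fun n : ℕ => 1 / h √(n / log (log n)))
  refine ((summable_one_div_nat_mul_log_rpow (p := 3 / 2) (by norm_num)).mul_left 64)
    |>.of_norm_bounded_eventually_nat ?_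
  have hlog : ∀ᶠ n : ℕ in atTop, 16 ≤ log n :=
    (tendsto_log_atTop.comp tendsto_natCast_atTop_atTop).eventually_ge_atTop 16
  filter_upwards [hlog] with n hn
  have hn0 : (0 : ℝ) < n := Nat.cast_pos.2 (Nat.pos_of_ne_zero (by rintro rfl; norm_num at hn))
  have hbound := mul_log_rpow_div_le_sq_mul_log_sq_sub_sq hn0 hn
  have hpos : 0 < (n : ℝ) * log n ^ (3 / 2 : ℝ) / 64 := by positivity
  rw [Real.norm_of_nonneg (one_div_nonneg.2 (hpos.trans_le hbound).le)]
  calc 1 / h _ ≤ 1 / ((n : ℝ) * log n ^ (3 / 2 : ℝ) / 64) := one_div_le_one_div_of_le hpos hbound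
    _ = 64 * (1 / (n * log n ^ (3 / 2 : ℝ))) := by field_simp
end

section
/- Suppose h: ℝ → ℝ is even, C², h(0) = h'(0) = h''(0) = 0, h'' strictly increasing, unbounded, concave on [0,∞). Then for all x ∈ ℝ and κ > 0, 1 + κx + (κx)²/2 − h(x)/h(1/κ) ≤ e^{κx}. -/
/-!
Write `t = κ x`. For `t ≥ 0` the claim is `1 + t + t²/2 ≤ eᵗ` since `h ≥ 0`. For `t < 0`, evenness
gives `h x = h (|t| / κ)`, and the growth of `h` under dilation bounds the ratio `h x / h (1/κ)`
from below: by `t²` when `|t| ≥ 1` (monotonicity of `h''`, integrated twice), which makes the left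
side negative, and by `|t|³` when `|t| ≤ 1` (concavity of `h''` with `h''(0) = 0`, integrated twice),
which the third-order Taylor bound of `eᵗ` absorbs.
-/

open Set

lemma mul_mul_le_comp_mul_of_deriv {f : ℝ → ℝ} (hf : Differentiable ℝ f) (hf0 : f 0 = 0)
    {a c : ℝ} (hc : 0 ≤ c) (hderiv : ∀ y, 0 ≤ y → a * deriv f y ≤ deriv f (c * y))
    {y : ℝ} (hy : 0 ≤ y) : a * c * f y ≤ f (c * y) := by
  set g : ℝ → ℝ := fun y => f (c * y) - a * c * f y
  have hg : ∀ y, HasDerivAt g (c * (deriv f (c * y) - a * deriv f y)) y := fun y => by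
    have hcomp : HasDerivAt (fun y => f (c * y)) (deriv f (c * y) * c) y :=
      (hf (c * y)).hasDerivAt.comp y (by simpa using (hasDerivAt_id y).const_mul c)
    exact (hcomp.sub ((hf y).hasDerivAt.const_mul (a * c))).congr_deriv (by ring)
  have hmono : MonotoneOn g (Ici 0) :=
    monotoneOn_of_deriv_nonneg (convex_Ici 0) (fun y _ => (hg y).continuousAt.continuousWithinAt)
      (fun y _ => (hg y).differentiableAt.differentiableWithinAt) fun z hz => by
        rw [interior_Ici] at hz
        rw [(hg z).deriv]
        exact mul_nonneg hc (sub_nonneg.2 (hderiv z hz.le))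
  have := hmono self_mem_Ici hy hy
  simp only [g, mul_zero, hf0] at this
  linarith

lemma pos_of_deriv_pos {f : ℝ → ℝ} (hf : Differentiable ℝ f) (hf0 : f 0 = 0)
    (hderiv : ∀ y, 0 < y → 0 < deriv f y) {y : ℝ} (hy : 0 < y) : 0 < f y := by
  have hmono : StrictMonoOn f (Ici 0) :=
    strictMonoOn_of_deriv_pos (convex_Ici 0) hf.continuous.continuousOn fun z hz => by
      rw [interior_Ici] at hz
      exact hderiv z hz
  simpa [hf0] using hmono self_mem_Ici hy.le hy

lemma one_add_add_sq_div_two_sub_pow_three_le_exp {t : ℝ} (ht : |t| ≤ 1) :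
    1 + t + t ^ 2 / 2 - |t| ^ 3 ≤ Real.exp t := by
  have hbound := Real.exp_bound ht (n := 3) (by norm_num)
  norm_num [Finset.sum_range_succ, Nat.factorial] at hbound
  have := (abs_le.mp hbound).1
  nlinarith [pow_nonneg (abs_nonneg t) 3]

section Dilation

variable {h : ℝ → ℝ} (hd : Differentiable ℝ h) (hd' : Differentiable ℝ (deriv h))
  (h0 : h 0 = 0) (h1 : deriv h 0 = 0)
include hd hd' h0 h1

lemma sq_mul_le_comp_mul (hmono : MonotoneOn (deriv (deriv h)) (Ici 0)) {c : ℝ} (hc : 1 ≤ c)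
    {y : ℝ} (hy : 0 ≤ y) : c ^ 2 * h y ≤ h (c * y) := by
  have hc0 : 0 ≤ c := zero_le_one.trans hc
  have hderiv : ∀ z, 0 ≤ z → c * deriv h z ≤ deriv h (c * z) := fun z hz => by
    simpa using mul_mul_le_comp_mul_of_deriv hd' h1 hc0 (a := 1) (fun w hw => by
      simpa using hmono hw (mul_nonneg hc0 hw) (le_mul_of_one_le_left hw hc)) hz
  simpa [sq] using mul_mul_le_comp_mul_of_deriv hd h0 hc0 hderiv hy

lemma pow_three_mul_le_comp_mul (h2 : deriv (deriv h) 0 = 0)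
    (hconc : ConcaveOn ℝ (Ici 0) (deriv (deriv h))) {c : ℝ} (hc0 : 0 ≤ c) (hc1 : c ≤ 1)
    {y : ℝ} (hy : 0 ≤ y) : c ^ 3 * h y ≤ h (c * y) := by
  have hderiv2 : ∀ z, 0 ≤ z → c * deriv (deriv h) z ≤ deriv (deriv h) (c * z) := fun z hz => by
    simpa [h2] using hconc.2 hz self_mem_Ici hc0 (sub_nonneg.2 hc1) (add_sub_cancel c 1)
  have hderiv : ∀ z, 0 ≤ z → c * c * deriv h z ≤ deriv h (c * z) := fun z hz =>
    mul_mul_le_comp_mul_of_deriv hd' h1 hc0 hderiv2 hz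
  simpa [pow_succ, mul_assoc] using mul_mul_le_comp_mul_of_deriv hd h0 hc0 hderiv hy

lemma pos_of_strictMonoOn_deriv_deriv (h2 : deriv (deriv h) 0 = 0)
    (hmono : StrictMonoOn (deriv (deriv h)) (Ici 0)) {y : ℝ} (hy : 0 < y) : 0 < h y :=
  pos_of_deriv_pos hd h0 (fun _ => pos_of_deriv_pos hd' h1 fun z hz => by
    simpa [h2] using hmono self_mem_Ici hz.le hz) hy

end Dilation

theorem stmt_14_general (h : ℝ → ℝ) (heven : ∀ x, h (-x) = h x) (hC2 : ContDiff ℝ 2 h)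
    (h0 : h 0 = 0) (h1 : deriv h 0 = 0) (h2 : deriv (deriv h) 0 = 0)
    (hmono : StrictMonoOn (deriv (deriv h)) (Set.Ici (0:ℝ)))
    (hconc : ConcaveOn ℝ (Set.Ici (0:ℝ)) (deriv (deriv h))) :
    ∀ x κ : ℝ, 0 < κ →
      1 + κ * x + (κ * x) ^ 2 / 2 - h x / h (1 / κ) ≤ Real.exp (κ * x) := by
  intro x κ hκ
  have hd := hC2.differentiable (by norm_num)
  have hd' := hC2.differentiable_deriv_two
  have hunit : 0 < h (1 / κ) := pos_of_strictMonoOn_deriv_deriv hd hd' h0 h1 h2 hmono (by positivity)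
  have habs : ∀ y, h |y| = h y := fun y => by rcases abs_choice y with hy | hy <;> simp [hy, heven]
  have hnonneg : ∀ y, 0 ≤ h y := fun y => by
    rw [← habs]
    rcases (abs_nonneg y).eq_or_lt with hy | hy
    · rw [← hy, h0]
    · exact (pos_of_strictMonoOn_deriv_deriv hd hd' h0 h1 h2 hmono hy).le
  have hx : h x = h (|κ * x| * (1 / κ)) := by
    rw [abs_mul, abs_of_pos hκ, mul_right_comm, mul_one_div_cancel hκ.ne', one_mul, habs]
  rcases le_or_gt 0 (κ * x) with ht | ht
  · have := div_nonneg (hnonneg x) hunit.le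
    linarith [Real.quadratic_le_exp_of_nonneg ht]
  rcases le_or_gt 1 |κ * x| with ht1 | ht1
  · have hratio : (κ * x) ^ 2 ≤ h x / h (1 / κ) := by
      rw [le_div_iff₀ hunit, hx, ← sq_abs]
      exact sq_mul_le_comp_mul hd hd' h0 h1 hmono.monotoneOn ht1 (by positivity)
    nlinarith [Real.exp_pos (κ * x), abs_of_neg ht]
  · have hratio : |κ * x| ^ 3 ≤ h x / h (1 / κ) := by
      rw [le_div_iff₀ hunit, hx]
      exact pow_three_mul_le_comp_mul hd hd' h0 h1 h2 hconc (abs_nonneg _) ht1.le (by positivity)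
    linarith [one_add_add_sq_div_two_sub_pow_three_le_exp ht1.le]

theorem stmt_14 (h : ℝ → ℝ) (heven : ∀ x, h (-x) = h x) (hC2 : ContDiff ℝ 2 h)
    (h0 : h 0 = 0) (h1 : deriv h 0 = 0) (h2 : deriv (deriv h) 0 = 0)
    (hmono : StrictMonoOn (deriv (deriv h)) (Set.Ici (0:ℝ)))
    (hunb : ∀ C : ℝ, ∃ x ≥ (0:ℝ), deriv (deriv h) x > C)
    (hconc : ConcaveOn ℝ (Set.Ici (0:ℝ)) (deriv (deriv h))) :
    ∀ x κ : ℝ, 0 < κ →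
      1 + κ * x + (κ * x) ^ 2 / 2 - h x / h (1 / κ) ≤ Real.exp (κ * x) :=
  stmt_14_general h heven hC2 h0 h1 h2 hmono hconc
end
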